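/- With R₀ = [[1,−1],[0,1]], R_{1/4} = −i√3·[[1,2/3],[−2,−1]] and R₁ = −i√3·[[1,1/3],[−4,−1]], one has R₀^{−1}R₁R_{1/4}R₀ = [[5,−1],[6,−1]] and R₀^{−1}R_{1/4}R₀R_{1/4}R₀ = [[7,−3],[12,−5]] (in particular both products have integer entries), and the subgroup of SL₂(ℤ) generated by the four matrices [[1,−1],[0,1]], [[5,−1],[6,−1]], [[7,−3],[12,−5]] and −I is equal to the congruence subgroup Γ₀(6). -/
import Mathlib


open Matrix
open scoped MatrixGroups

noncomputable section

/-- The map `σ : GL₂(ℂ) → GL₃(ℂ)` (given here on the underlying matrices), defined on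
`A = [[a,b],[c,d]]` by the explicit formula of the banana monodromy analysis. -/
def sigmaMat (A : Matrix (Fin 2) (Fin 2) ℂ) : Matrix (Fin 3) (Fin 3) ℂ :=
  let a := A 0 0
  let b := A 0 1
  let c := A 1 0
  let d := A 1 1
  (3 : ℂ)⁻¹ •
    !![(a + c) * (3 * a + c),
        2 * Complex.I * (6 * a ^ 2 - 9 * a * b + 8 * a * c - 6 * a * d - 6 * b * c
          + 2 * c ^ 2 - 3 * c * d),
        -3 * (3 * a - 3 * b + c - d) * (a - b + c - d);
      Complex.I * c * (a + c),
        -4 * a * c + 3 * a * d + 3 * b * c - 4 * c ^ 2 + 6 * c * d,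
        -3 * Complex.I * (c - d) * (a - b + c - d);
      -c ^ 2,
        -2 * Complex.I * c * (2 * c - 3 * d),
        3 * (c - d) ^ 2]

/-- `R₀ = [[1,-1],[0,1]]`, the 2×2 monodromy generator of the banana integral at `x = 0`. -/
def R0 : Matrix (Fin 2) (Fin 2) ℂ := !![1, -1; 0, 1]

/-- `R_{1/4} = -i√3·[[1,2/3],[-2,-1]]`, the 2×2 monodromy generator at `x = 1/4`. -/
def Rquarter : Matrix (Fin 2) (Fin 2) ℂ :=
  (-Complex.I * (Real.sqrt 3 : ℂ)) • !![1, 2/3; -2, -1]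

/-- `R₁ = -i√3·[[1,1/3],[-4,-1]]`, the 2×2 monodromy generator at `x = 1`. -/
def R1 : Matrix (Fin 2) (Fin 2) ℂ :=
  (-Complex.I * (Real.sqrt 3 : ℂ)) • !![1, 1/3; -4, -1]

lemma sqrt3_sq : ((Real.sqrt 3 : ℝ) : ℂ) ^ 2 = 3 := by
  rw [← Complex.ofReal_pow, Real.sq_sqrt (by norm_num : (0:ℝ) ≤ 3)]; norm_num

lemma coeff_sq : (-Complex.I * (Real.sqrt 3 : ℂ)) * (-Complex.I * (Real.sqrt 3 : ℂ)) = -3 := by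
  have h : (-Complex.I * (Real.sqrt 3 : ℂ)) * (-Complex.I * (Real.sqrt 3 : ℂ))
      = Complex.I ^ 2 * ((Real.sqrt 3 : ℂ) ^ 2) := by ring
  rw [h, Complex.I_sq, sqrt3_sq]; ring

/-- `R₀` as an element of `GL₂(ℂ)`. -/
def R0gl : GL (Fin 2) ℂ :=
  ⟨R0, !![1, 1; 0, 1],
    by unfold R0; rw [Matrix.mul_fin_two, Matrix.one_fin_two]; norm_num,
    by unfold R0; rw [Matrix.mul_fin_two, Matrix.one_fin_two]; norm_num⟩

/-- `R_{1/4}` as an element of `GL₂(ℂ)`; it is its own inverse. -/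
def Rquartergl : GL (Fin 2) ℂ :=
  ⟨Rquarter, Rquarter,
    by unfold Rquarter
       rw [smul_mul_smul_comm, coeff_sq, Matrix.mul_fin_two, Matrix.one_fin_two]; norm_num,
    by unfold Rquarter
       rw [smul_mul_smul_comm, coeff_sq, Matrix.mul_fin_two, Matrix.one_fin_two]; norm_num⟩

/-- `R₁` as an element of `GL₂(ℂ)`; it is its own inverse. -/
def R1gl : GL (Fin 2) ℂ :=
  ⟨R1, R1,
    by unfold R1
       rw [smul_mul_smul_comm, coeff_sq, Matrix.mul_fin_two, Matrix.one_fin_two]; norm_num,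
    by unfold R1
       rw [smul_mul_smul_comm, coeff_sq, Matrix.mul_fin_two, Matrix.one_fin_two]; norm_num⟩

/-- The 2×2 monodromy group `Γ^{ban,(2)}` of the three-loop equal-mass banana integral. -/
def GammaBan2 : Subgroup (GL (Fin 2) ℂ) := Subgroup.closure {R0gl, Rquartergl, R1gl}

open scoped MatrixGroups

/-- `[[1,-1],[0,1]]` as an element of `SL(2, ℤ)`. -/
def g0 : SL(2, ℤ) := ⟨!![1, -1; 0, 1], by norm_num [Matrix.det_fin_two_of]⟩

/-- `[[5,-1],[6,-1]]` as an element of `SL(2, ℤ)`. -/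
def g1 : SL(2, ℤ) := ⟨!![5, -1; 6, -1], by norm_num [Matrix.det_fin_two_of]⟩

/-- `[[7,-3],[12,-5]]` as an element of `SL(2, ℤ)`. -/
def g2 : SL(2, ℤ) := ⟨!![7, -3; 12, -5], by norm_num [Matrix.det_fin_two_of]⟩

/-- `-I` as an element of `SL(2, ℤ)`. -/
def gneg : SL(2, ℤ) := ⟨!![-1, 0; 0, -1], by norm_num [Matrix.det_fin_two_of]⟩


def g1i : SL(2, ℤ) := ⟨!![-1, 1; -6, 5], by norm_num [Matrix.det_fin_two_of]⟩
def g2i : SL(2, ℤ) := ⟨!![-5, 3; -12, 7], by norm_num [Matrix.det_fin_two_of]⟩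

def HH : Subgroup SL(2,ℤ) := Subgroup.closure {g0, g1, g2, gneg}

lemma sl_ext (A B : SL(2,ℤ)) (h : (A : Matrix (Fin 2) (Fin 2) ℤ) = B) : A = B := Subtype.ext h

lemma mul_mat (A B : SL(2,ℤ)) : ((A * B : SL(2,ℤ)) : Matrix (Fin 2) (Fin 2) ℤ) = A.val * B.val := rfl

lemma T_eq : ModularGroup.T = g0⁻¹ := by
  apply eq_inv_of_mul_eq_one_right
  apply sl_ext
  rw [mul_mat, ModularGroup.coe_T]
  show _ = (1 : Matrix (Fin 2) (Fin 2) ℤ)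
  unfold g0
  rw [Matrix.mul_fin_two, Matrix.one_fin_two]; norm_num

lemma g0_mem : g0 ∈ HH := Subgroup.subset_closure (by simp)
lemma g1_mem : g1 ∈ HH := Subgroup.subset_closure (by simp)
lemma g2_mem : g2 ∈ HH := Subgroup.subset_closure (by simp)
lemma gneg_mem : gneg ∈ HH := Subgroup.subset_closure (by simp)

lemma T_mem : ModularGroup.T ∈ HH := by
  rw [T_eq]; exact Subgroup.inv_mem _ g0_mem

lemma Tz_mem (n : ℤ) : ModularGroup.T ^ n ∈ HH := Subgroup.zpow_mem _ T_mem n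

lemma g1i_eq : g1i = g1⁻¹ := by
  apply eq_inv_of_mul_eq_one_left
  apply sl_ext
  rw [mul_mat]
  show _ = (1 : Matrix (Fin 2) (Fin 2) ℤ)
  unfold g1 g1i
  rw [Matrix.mul_fin_two, Matrix.one_fin_two]; norm_num

lemma g2i_eq : g2i = g2⁻¹ := by
  apply eq_inv_of_mul_eq_one_left
  apply sl_ext
  rw [mul_mat]
  show _ = (1 : Matrix (Fin 2) (Fin 2) ℤ)
  unfold g2 g2i
  rw [Matrix.mul_fin_two, Matrix.one_fin_two]; norm_num

lemma g1i_mem : g1i ∈ HH := by rw [g1i_eq]; exact Subgroup.inv_mem _ g1_mem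
lemma g2i_mem : g2i ∈ HH := by rw [g2i_eq]; exact Subgroup.inv_mem _ g2_mem

lemma entry10 (P M : Matrix (Fin 2) (Fin 2) ℤ) :
    (P * M) 1 0 = P 1 0 * M 0 0 + P 1 1 * M 1 0 := by
  rw [Matrix.mul_apply, Fin.sum_univ_two]

lemma entry00 (P M : Matrix (Fin 2) (Fin 2) ℤ) :
    (P * M) 0 0 = P 0 0 * M 0 0 + P 0 1 * M 1 0 := by
  rw [Matrix.mul_apply, Fin.sum_univ_two]

lemma word_c (W : SL(2,ℤ)) (m : ℤ) (A : SL(2,ℤ)) :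
    ((W * ModularGroup.T ^ m * A : SL(2,ℤ)) : Matrix (Fin 2) (Fin 2) ℤ) 1 0
      = W.val 1 0 * (A.val 0 0 + m * A.val 1 0) + W.val 1 1 * A.val 1 0 := by
  rw [mul_mat, mul_mat, ModularGroup.coe_T_zpow, Matrix.mul_assoc, entry10, entry00, entry10]
  simp [Matrix.cons_val_zero, Matrix.cons_val_one]


lemma descent_pos (a k : ℤ) (hk : 0 < k) (ha2 : ¬ (2:ℤ) ∣ a) (ha3 : ¬ (3:ℤ) ∣ a)
    (hcop : IsCoprime a k) :
    ∃ u : ℤ, ((u % 6 = 1 ∨ u % 6 = 5) ∧ (a - k * u).natAbs < k.natAbs) ∨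
      ((u % 12 = 5 ∨ u % 12 = 7) ∧ (2 * a - k * u).natAbs < k.natAbs) := by
  have hk0 : k ≠ 0 := hk.ne'
  set q := a / k with hq
  set r := a % k with hr
  have hdm : k * q + r = a := Int.mul_ediv_add_emod a k
  have hr0 : 0 ≤ r := Int.emod_nonneg a hk0
  have hrlt : r < k := Int.emod_lt_of_pos a hk
  by_cases hrz : r = 0
  · have hkd : k ∣ a := ⟨q, by rw [← hdm, hrz, add_zero]⟩
    have hu : IsUnit k := hcop.isUnit_of_dvd' hkd dvd_rfl
    have hk1 : k = 1 := by rcases Int.isUnit_iff.1 hu with h | h <;> omega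
    refine ⟨a, Or.inl ⟨by omega, ?_⟩⟩
    have h0 : a - k * a = 0 := by rw [hk1]; ring
    rw [h0, hk1]; simp
  · have hr1 : 0 < r := lt_of_le_of_ne hr0 (Ne.symm hrz)
    have he : q % 6 = 0 ∨ q % 6 = 1 ∨ q % 6 = 2 ∨ q % 6 = 3 ∨ q % 6 = 4 ∨ q % 6 = 5 := by omega
    rcases he with h | h | h | h | h | h
    · refine ⟨q + 1, Or.inl ⟨Or.inl (by omega), ?_⟩⟩
      have h1 : a - k * (q + 1) = r - k := by linear_combination -hdm
      rw [h1]; omega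
    · refine ⟨q, Or.inl ⟨Or.inl h, ?_⟩⟩
      have h1 : a - k * q = r := by linear_combination -hdm
      rw [h1]; omega
    · refine ⟨2 * q + 1, Or.inr ⟨Or.inl (by omega), ?_⟩⟩
      have h1 : 2 * a - k * (2 * q + 1) = 2 * r - k := by linear_combination -2 * hdm
      rw [h1]; omega
    · refine ⟨2 * q + 1, Or.inr ⟨Or.inr (by omega), ?_⟩⟩
      have h1 : 2 * a - k * (2 * q + 1) = 2 * r - k := by linear_combination -2 * hdm
      rw [h1]; omega
    · refine ⟨q + 1, Or.inl ⟨Or.inr (by omega), ?_⟩⟩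
      have h1 : a - k * (q + 1) = r - k := by linear_combination -hdm
      rw [h1]; omega
    · refine ⟨q, Or.inl ⟨Or.inr h, ?_⟩⟩
      have h1 : a - k * q = r := by linear_combination -hdm
      rw [h1]; omega

lemma descent (a k : ℤ) (hk : k ≠ 0) (ha2 : ¬ (2:ℤ) ∣ a) (ha3 : ¬ (3:ℤ) ∣ a)
    (hcop : IsCoprime a k) :
    ∃ u : ℤ, ((u % 6 = 1 ∨ u % 6 = 5) ∧ (a - k * u).natAbs < k.natAbs) ∨
      ((u % 12 = 5 ∨ u % 12 = 7) ∧ (2 * a - k * u).natAbs < k.natAbs) := by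
  rcases hk.lt_or_gt with hneg | hpos
  · obtain ⟨u, hu⟩ := descent_pos (-a) (-k) (by omega)
      (by simpa using ha2) (by simpa using ha3) (hcop.neg_left.neg_right)
    refine ⟨u, ?_⟩
    have e1 : -a - -k * u = -(a - k * u) := by ring
    have e2 : 2 * -a - -k * u = -(2 * a - k * u) := by ring
    rw [e1, e2, Int.natAbs_neg, Int.natAbs_neg, Int.natAbs_neg] at hu
    exact hu
  · exact descent_pos a k hpos ha2 ha3 hcop

-- base case: c = 0
lemma caseC0 (A : SL(2,ℤ)) (hc : (A : Matrix (Fin 2) (Fin 2) ℤ) 1 0 = 0) : A ∈ HH := by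
  have hdet : A.val 0 0 * A.val 1 1 - A.val 0 1 * A.val 1 0 = 1 := by
    have := A.2
    rwa [Matrix.det_fin_two] at this
  rw [hc, mul_zero, sub_zero] at hdet
  rcases Int.mul_eq_one_iff_eq_one_or_neg_one.1 hdet with ⟨ha, hd⟩ | ⟨ha, hd⟩
  · have : A = ModularGroup.T ^ (A.val 0 1) := by
      apply sl_ext
      rw [ModularGroup.coe_T_zpow]
      ext i j
      fin_cases i <;> fin_cases j <;> simp [ha, hd, hc]
    rw [this]; exact Tz_mem _
  · have : A = gneg * ModularGroup.T ^ (-(A.val 0 1)) := by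
      apply sl_ext
      rw [mul_mat, ModularGroup.coe_T_zpow]
      show _ = !![-1, 0; 0, -1] * _
      rw [Matrix.mul_fin_two]
      ext i j
      fin_cases i <;> fin_cases j <;> simp [ha, hd, hc]
    rw [this]
    exact Subgroup.mul_mem _ gneg_mem (Tz_mem _)


lemma main_ind : ∀ n : ℕ, ∀ A : SL(2,ℤ), (A.val 1 0).natAbs ≤ n → (6:ℤ) ∣ A.val 1 0 → A ∈ HH := by
  intro n
  induction n with
  | zero => intro A h _; exact caseC0 A (by omega)
  | succ n ih =>
    intro A hn hdvd
    by_cases hc0 : A.val 1 0 = 0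
    · exact caseC0 A hc0
    · obtain ⟨k, hk⟩ := hdvd
      have hk0 : k ≠ 0 := by intro h; apply hc0; rw [hk, h, mul_zero]
      have hdet : A.val 0 0 * A.val 1 1 - A.val 0 1 * A.val 1 0 = 1 := by
        have := A.2; rwa [Matrix.det_fin_two] at this
      have ha2 : ¬ (2:ℤ) ∣ A.val 0 0 := by
        rintro ⟨a', ha'⟩
        have h21 : (2:ℤ) ∣ 1 := ⟨a' * A.val 1 1 - 3 * A.val 0 1 * k, by
          linear_combination -hdet + A.val 1 1 * ha' - A.val 0 1 * hk⟩
        norm_num at h21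
      have ha3 : ¬ (3:ℤ) ∣ A.val 0 0 := by
        rintro ⟨a', ha'⟩
        have h31 : (3:ℤ) ∣ 1 := ⟨a' * A.val 1 1 - 2 * A.val 0 1 * k, by
          linear_combination -hdet + A.val 1 1 * ha' - A.val 0 1 * hk⟩
        norm_num at h31
      have hcop : IsCoprime (A.val 0 0) k :=
        ⟨A.val 1 1, -6 * A.val 0 1, by linear_combination hdet + A.val 0 1 * hk⟩
      obtain ⟨u, hcase⟩ := descent (A.val 0 0) k hk0 ha2 ha3 hcop
      rcases hcase with ⟨hres, hlt⟩ | ⟨hres, hlt⟩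
      · rcases hres with hres | hres
        · -- W = g1
          obtain ⟨m, hm⟩ : ∃ m : ℤ, u = 1 - 6 * m := ⟨(1 - u) / 6, by omega⟩
          set B := g1 * ModularGroup.T ^ m * A with hB
          have hBc : B.val 1 0 = 6 * (A.val 0 0 - k * u) := by
            rw [hB, word_c]
            show (6:ℤ) * (A.val 0 0 + m * A.val 1 0) + (-1) * A.val 1 0 = _
            rw [hk, hm]; ring
          have hBlt : (B.val 1 0).natAbs ≤ n := by
            rw [hBc, Int.natAbs_mul]
            rw [hk, Int.natAbs_mul] at hn
            simp only [show ((6:ℤ)).natAbs = 6 from rfl, show ((-6:ℤ)).natAbs = 6 from rfl] at hn ⊢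
            omega
          have hBH : B ∈ HH := ih B hBlt ⟨A.val 0 0 - k * u, hBc⟩
          have hA : A = (g1 * ModularGroup.T ^ m)⁻¹ * B :=
            (inv_mul_cancel_left (g1 * ModularGroup.T ^ m) A).symm
          rw [hA]
          exact Subgroup.mul_mem _ (Subgroup.inv_mem _
            (Subgroup.mul_mem _ g1_mem (Tz_mem m))) hBH
        · -- W = g1i
          obtain ⟨m, hm⟩ : ∃ m : ℤ, u = 5 - 6 * m := ⟨(5 - u) / 6, by omega⟩
          set B := g1i * ModularGroup.T ^ m * A with hB
          have hBc : B.val 1 0 = -6 * (A.val 0 0 - k * u) := by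
            rw [hB, word_c]
            show (-6:ℤ) * (A.val 0 0 + m * A.val 1 0) + 5 * A.val 1 0 = _
            rw [hk, hm]; ring
          have hBlt : (B.val 1 0).natAbs ≤ n := by
            rw [hBc, Int.natAbs_mul]
            rw [hk, Int.natAbs_mul] at hn
            simp only [show ((6:ℤ)).natAbs = 6 from rfl, show ((-6:ℤ)).natAbs = 6 from rfl] at hn ⊢
            omega
          have hBH : B ∈ HH := ih B hBlt ⟨-(A.val 0 0 - k * u), by rw [hBc]; ring⟩
          have hA : A = (g1i * ModularGroup.T ^ m)⁻¹ * B :=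
            (inv_mul_cancel_left (g1i * ModularGroup.T ^ m) A).symm
          rw [hA]
          exact Subgroup.mul_mem _ (Subgroup.inv_mem _
            (Subgroup.mul_mem _ g1i_mem (Tz_mem m))) hBH
      · rcases hres with hres | hres
        · -- W = g2
          obtain ⟨m, hm⟩ : ∃ m : ℤ, u = 5 - 12 * m := ⟨(5 - u) / 12, by omega⟩
          set B := g2 * ModularGroup.T ^ m * A with hB
          have hBc : B.val 1 0 = 6 * (2 * A.val 0 0 - k * u) := by
            rw [hB, word_c]
            show (12:ℤ) * (A.val 0 0 + m * A.val 1 0) + (-5) * A.val 1 0 = _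
            rw [hk, hm]; ring
          have hBlt : (B.val 1 0).natAbs ≤ n := by
            rw [hBc, Int.natAbs_mul]
            rw [hk, Int.natAbs_mul] at hn
            simp only [show ((6:ℤ)).natAbs = 6 from rfl, show ((-6:ℤ)).natAbs = 6 from rfl] at hn ⊢
            omega
          have hBH : B ∈ HH := ih B hBlt ⟨2 * A.val 0 0 - k * u, hBc⟩
          have hA : A = (g2 * ModularGroup.T ^ m)⁻¹ * B :=
            (inv_mul_cancel_left (g2 * ModularGroup.T ^ m) A).symm
          rw [hA]
          exact Subgroup.mul_mem _ (Subgroup.inv_mem _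
            (Subgroup.mul_mem _ g2_mem (Tz_mem m))) hBH
        · -- W = g2i
          obtain ⟨m, hm⟩ : ∃ m : ℤ, u = 7 - 12 * m := ⟨(7 - u) / 12, by omega⟩
          set B := g2i * ModularGroup.T ^ m * A with hB
          have hBc : B.val 1 0 = -6 * (2 * A.val 0 0 - k * u) := by
            rw [hB, word_c]
            show (-12:ℤ) * (A.val 0 0 + m * A.val 1 0) + 7 * A.val 1 0 = _
            rw [hk, hm]; ring
          have hBlt : (B.val 1 0).natAbs ≤ n := by
            rw [hBc, Int.natAbs_mul]
            rw [hk, Int.natAbs_mul] at hn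
            simp only [show ((6:ℤ)).natAbs = 6 from rfl, show ((-6:ℤ)).natAbs = 6 from rfl] at hn ⊢
            omega
          have hBH : B ∈ HH := ih B hBlt ⟨-(2 * A.val 0 0 - k * u), by rw [hBc]; ring⟩
          have hA : A = (g2i * ModularGroup.T ^ m)⁻¹ * B :=
            (inv_mul_cancel_left (g2i * ModularGroup.T ^ m) A).symm
          rw [hA]
          exact Subgroup.mul_mem _ (Subgroup.inv_mem _
            (Subgroup.mul_mem _ g2i_mem (Tz_mem m))) hBH

lemma closure_eq_gamma0 : HH = CongruenceSubgroup.Gamma0 6 := by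
  apply le_antisymm
  · rw [HH, Subgroup.closure_le]
    rintro x hx
    simp only [Set.mem_insert_iff, Set.mem_singleton_iff] at hx
    rcases hx with rfl | rfl | rfl | rfl <;>
      · rw [SetLike.mem_coe, CongruenceSubgroup.Gamma0_mem]
        decide
  · intro A hA
    have h0 : ((A.val 1 0 : ℤ) : ZMod 6) = 0 := by
      have := CongruenceSubgroup.Gamma0_mem.1 hA
      exact_mod_cast this
    have hd : (6:ℤ) ∣ A.val 1 0 := by
      have := (ZMod.intCast_zmod_eq_zero_iff_dvd (A.val 1 0) 6).1 h0
      exact_mod_cast this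
    exact main_ind (A.val 1 0).natAbs A le_rfl hd


/-- The products `R₀⁻¹R₁R_{1/4}R₀` and `R₀⁻¹R_{1/4}R₀R_{1/4}R₀` are the integer matrices
`[[5,-1],[6,-1]]` and `[[7,-3],[12,-5]]`, and together with `R₀ = [[1,-1],[0,1]]` and `-I`
these generate the congruence subgroup `Γ₀(6)` inside `SL(2, ℤ)`. -/
theorem banana_words_generate_Gamma0_six :
    ((R0gl⁻¹ * R1gl * Rquartergl * R0gl : GL (Fin 2) ℂ) : Matrix (Fin 2) (Fin 2) ℂ) =
      !![5, -1; 6, -1] ∧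
    ((R0gl⁻¹ * Rquartergl * R0gl * Rquartergl * R0gl : GL (Fin 2) ℂ) :
        Matrix (Fin 2) (Fin 2) ℂ) = !![7, -3; 12, -5] ∧
    Subgroup.closure {g0, g1, g2, gneg} = CongruenceSubgroup.Gamma0 6 := by
  refine ⟨?_, ?_, ?_⟩
  · have h0 : ((R0gl⁻¹ : GL (Fin 2) ℂ) : Matrix (Fin 2) (Fin 2) ℂ) = !![1, 1; 0, 1] := rfl
    show (R0gl⁻¹ : GL (Fin 2) ℂ).val * R1gl.val * Rquartergl.val * R0gl.val = _
    rw [h0]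
    show !![1, 1; 0, 1] * R1 * Rquarter * R0 = _
    unfold R0 R1 Rquarter
    simp only [Matrix.smul_mul, Matrix.mul_smul, smul_smul, coeff_sq]
    rw [Matrix.mul_fin_two, Matrix.mul_fin_two, Matrix.mul_fin_two]
    ext i j; fin_cases i <;> fin_cases j <;> simp <;> norm_num
  · show (R0gl⁻¹ : GL (Fin 2) ℂ).val * Rquartergl.val * R0gl.val * Rquartergl.val * R0gl.val = _
    show !![1, 1; 0, 1] * Rquarter * R0 * Rquarter * R0 = _
    unfold R0 Rquarter
    simp only [Matrix.smul_mul, Matrix.mul_smul, smul_smul, coeff_sq]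
    rw [Matrix.mul_fin_two, Matrix.mul_fin_two, Matrix.mul_fin_two, Matrix.mul_fin_two]
    ext i j; fin_cases i <;> fin_cases j <;> simp <;> norm_num
  · exact closure_eq_gamma0


end
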